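/- The dynamic program g satisfies: the minimum over all tours of the path-metric W-TSP with fixed start node t (weight of t collected last) equals min( g(v_1,v_n,v_1,t) + f(0)·d(t,v_1), g(v_1,v_n,v_n,t) + f(0)·d(t,v_n) ). -/

import Mathlib

/-- Cost of the restricted tour on interval `[i, j]` determined by a choice sequence
(see the path-metric DP); identical to `restrictedCost` in stmt_9. -/
noncomputable def restrictedCost (f : ℝ → ℝ) (x w : ℕ → ℝ) (xt Wtot : ℝ) :
    ℕ → ℕ → ℕ → ℝ → List Bool → ℝ
  | _, _, cur, _, [] => |x cur - xt| * f Wtot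
  | i, j, cur, acc, b :: bs =>
      if cur = i then
        let nxt : ℕ := if b then i + 1 else j
        f (acc + w i) * |x i - x nxt| + restrictedCost f x w xt Wtot (i + 1) j nxt (acc + w i) bs
      else
        let nxt : ℕ := if b then i else j - 1
        f (acc + w j) * |x j - x nxt| + restrictedCost f x w xt Wtot i (j - 1) nxt (acc + w j) bs

/-- The DP value `g(v_i, v_j, s, t)`. -/
noncomputable def gDP (f : ℝ → ℝ) (x w : ℕ → ℝ) (xt Wtot : ℝ) (i j cur : ℕ) (acc : ℝ) : ℝ :=
  sInf ((fun bs => restrictedCost f x w xt Wtot i j cur acc bs) ''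
    { bs : List Bool | bs.length = j - i })

/-- Cost of a full path-metric W-TSP tour with fixed start `t` (at coordinate `xt`,
its weight collected last): go from `t` to the first node at cost-rate `f 0`, then
traverse the nodes `0, …, m` of the line in the order `σ`, finally return to `t`
carrying the total weight. -/
noncomputable def fullTourCost (m : ℕ) (x w : ℕ → ℝ) (xt : ℝ) (f : ℝ → ℝ)
    (σ : Equiv.Perm (Fin (m + 1))) : ℝ :=
  f 0 * |xt - x (σ 0).val| +
    (∑ i : Fin m, f (∑ j ∈ Finset.Iic (i.castSucc : Fin (m + 1)), w (σ j).val) *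
      |x (σ i.castSucc).val - x (σ i.succ).val|) +
    f (∑ ℓ ∈ Finset.range (m + 1), w ℓ) * |x (σ (Fin.last m)).val - xt|

/-!
A tour that still has to visit a set of nodes spanning `[i, j]`, and carries at least the
weight `acc`, costs at least the DP value of entering `[i, j]` with weight `acc`. This goes by
induction along the tour, treating the nodes of `[i, j]` that the tour has already visited as
collected in advance (this only adds weight, and `f` is monotone). If the next node `q` lies
strictly inside `[i, j]`, entering `[i, j]` directly is shorter by the triangle inequality. If
`q` is an end of `[i, j]`, the DP walks along the line from `q` to the nearer end of the
remaining span, collecting the nodes in between: on a line this walk is no longer than the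
tour's move, and the DP carries no more weight than the tour. Conversely, every choice sequence
of the DP is the order of some tour.
-/

open Finset

theorem Fin.sum_Iic_succ {M : Type*} [AddCommMonoid M] {n : ℕ} (g : Fin (n + 1) → M)
    (c : Fin n) : ∑ j ∈ Iic c.succ, g j = g 0 + ∑ j ∈ Iic c, g j.succ := by
  rw [← Icc_bot, ← add_sum_Ioc_eq_sum_Icc bot_le, bot_eq_zero, ← Fin.map_succEmb_Iic, sum_map]
  rfl

theorem List.sum_map_le_sum_of_subset {α : Type*} [DecidableEq α] {w : α → ℝ}
    (hw : ∀ a, 0 ≤ w a) {l : List α} (hl : l.Nodup) {s : Finset α}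
    (hs : ∀ a ∈ l, a ∈ s) :
    (l.map w).sum ≤ ∑ a ∈ s, w a := by
  rw [← List.sum_toFinset w hl]
  exact sum_le_sum_of_subset_of_nonneg (fun a ha => hs a (List.mem_toFinset.1 ha))
    fun a _ _ => hw a

theorem List.exists_ofFn_perm_eq {n : ℕ} {L : List ℕ} (h : L.Perm (List.range n)) :
    ∃ σ : Equiv.Perm (Fin n), List.ofFn (fun k => (σ k : ℕ)) = L := by
  obtain rfl : L.length = n := by simpa using h.length_eq
  have hnd : L.Nodup := h.nodup_iff.2 List.nodup_range
  let v : Fin L.length → Fin L.length := fun k =>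
    ⟨L[k], List.mem_range.1 (h.subset (List.getElem_mem _))⟩
  have hv : Function.Injective v := fun a b hab =>
    Fin.ext (hnd.getElem_inj_iff.1 (congrArg Fin.val hab))
  exact ⟨Equiv.ofBijective v (Finite.injective_iff_bijective.1 hv), List.ofFn_getElem⟩

theorem abs_sub_eq_abs_sub_add_abs_sub {a b c : ℝ} (h : b ∈ Set.uIcc a c) :
    |a - c| = |a - b| + |b - c| := by
  rcases Set.mem_uIcc.1 h with ⟨hab, hbc⟩ | ⟨hcb, hba⟩
  · rw [abs_of_nonpos, abs_of_nonpos, abs_of_nonpos] <;> linarith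
  · rw [abs_of_nonneg, abs_of_nonneg, abs_of_nonneg] <;> linarith

section TourCost

variable (f : ℝ → ℝ) (x w : ℕ → ℝ) (xt Wtot : ℝ)

/-- Visiting the nodes of a list in order, starting at coordinate `xc` with weight `acc`, and
then returning to `t`. -/
noncomputable def listCost : ℝ → ℝ → List ℕ → ℝ
  | _, xc, [] => f Wtot * |xc - xt|
  | acc, xc, p :: ps => f acc * |xc - x p| + listCost (acc + w p) (x p) ps

/-- The DP value of entering `[i, j]` at the better of its two ends, coming from `xc` with
weight `acc`. -/
noncomputable def enterCost (i j : ℕ) (acc xc : ℝ) : ℝ :=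
  min (f acc * |xc - x i| + gDP f x w xt Wtot i j i acc)
    (f acc * |xc - x j| + gDP f x w xt Wtot i j j acc)

def Spans (l : List ℕ) (i j : ℕ) : Prop :=
  i ∈ l ∧ j ∈ l ∧ ∀ a ∈ l, i ≤ a ∧ a ≤ j

variable {f x w xt Wtot}

theorem listCost_ofFn : ∀ {n : ℕ} (v : Fin (n + 1) → ℕ) (acc xc : ℝ),
    listCost f x w xt Wtot acc xc (List.ofFn v) = f acc * |xc - x (v 0)| +
      ∑ k : Fin n,
        f (acc + ∑ l ∈ Iic k.castSucc, w (v l)) * |x (v k.castSucc) - x (v k.succ)| +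
      f Wtot * |x (v (Fin.last n)) - xt|
  | 0, v, acc, xc => by simp [listCost]
  | n + 1, v, acc, xc => by
    rw [List.ofFn_succ, listCost, listCost_ofFn (fun k => v k.succ), Fin.sum_univ_succ]
    simp only [← Fin.succ_castSucc, Fin.sum_Iic_succ, ← add_assoc, Fin.succ_last]
    simp [Fin.castSucc_zero, show Iic (0 : Fin (n + 2)) = {0} from Iic_bot]

theorem fullTourCost_eq_listCost {m : ℕ} (hWtot : Wtot = ∑ ℓ ∈ range (m + 1), w ℓ)
    (σ : Equiv.Perm (Fin (m + 1))) :
    fullTourCost m x w xt f σ = listCost f x w xt Wtot 0 xt (List.ofFn fun k => (σ k : ℕ)) := by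
  rw [listCost_ofFn, fullTourCost, hWtot]
  simp only [zero_add]

theorem gDP_le {i j cur : ℕ} {acc : ℝ} {bs : List Bool} (h : bs.length = j - i) :
    gDP f x w xt Wtot i j cur acc ≤ restrictedCost f x w xt Wtot i j cur acc bs :=
  csInf_le ((List.finite_length_eq _ _).image _).bddBelow ⟨bs, h, rfl⟩

variable (f x w xt Wtot) in
theorem exists_restrictedCost_eq_gDP (i j cur : ℕ) (acc : ℝ) :
    ∃ bs : List Bool, bs.length = j - i ∧
      restrictedCost f x w xt Wtot i j cur acc bs = gDP f x w xt Wtot i j cur acc :=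
  Set.Nonempty.csInf_mem
    (Set.Nonempty.image _ ⟨List.replicate (j - i) false, List.length_replicate⟩)
    ((List.finite_length_eq _ _).image _)

theorem gDP_self (q : ℕ) (acc : ℝ) : gDP f x w xt Wtot q q q acc = f Wtot * |x q - xt| := by
  have h : {bs : List Bool | bs.length = q - q} = {[]} := by
    ext bs
    simp [List.length_eq_zero_iff]
  rw [gDP, h, Set.image_singleton, csInf_singleton, restrictedCost, mul_comm]

theorem gDP_left_le {i j : ℕ} (hij : i < j) (b : Bool) (acc : ℝ) :
    gDP f x w xt Wtot i j i acc ≤ f (acc + w i) * |x i - x (if b then i + 1 else j)| +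
      gDP f x w xt Wtot (i + 1) j (if b then i + 1 else j) (acc + w i) := by
  obtain ⟨bs, hlen, hbs⟩ :=
    exists_restrictedCost_eq_gDP f x w xt Wtot (i + 1) j (if b then i + 1 else j) (acc + w i)
  calc gDP f x w xt Wtot i j i acc ≤ restrictedCost f x w xt Wtot i j i acc (b :: bs) :=
        gDP_le (by simp only [List.length_cons, hlen]; omega)
    _ = _ := by rw [← hbs, restrictedCost, if_pos rfl]

theorem gDP_right_le {i j : ℕ} (hij : i < j) (b : Bool) (acc : ℝ) :
    gDP f x w xt Wtot i j j acc ≤ f (acc + w j) * |x j - x (if b then i else j - 1)| +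
      gDP f x w xt Wtot i (j - 1) (if b then i else j - 1) (acc + w j) := by
  obtain ⟨bs, hlen, hbs⟩ :=
    exists_restrictedCost_eq_gDP f x w xt Wtot i (j - 1) (if b then i else j - 1) (acc + w j)
  calc gDP f x w xt Wtot i j j acc ≤ restrictedCost f x w xt Wtot i j j acc (b :: bs) :=
        gDP_le (by simp only [List.length_cons, hlen]; omega)
    _ = _ := by rw [← hbs, restrictedCost, if_neg hij.ne']

theorem gDP_left_le_enterCost {i j : ℕ} (hij : i < j) (acc : ℝ) :
    gDP f x w xt Wtot i j i acc ≤ enterCost f x w xt Wtot (i + 1) j (acc + w i) (x i) :=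
  le_min (by simpa using gDP_left_le hij true acc) (by simpa using gDP_left_le hij false acc)

theorem gDP_right_le_enterCost {i j : ℕ} (hij : i < j) (acc : ℝ) :
    gDP f x w xt Wtot i j j acc ≤ enterCost f x w xt Wtot i (j - 1) (acc + w j) (x j) :=
  le_min (by simpa using gDP_right_le hij true acc) (by simpa using gDP_right_le hij false acc)

theorem enterCost_le_add_enterCost (hf0 : ∀ y, 0 ≤ f y) (i j : ℕ) (acc xc y : ℝ) :
    enterCost f x w xt Wtot i j acc xc ≤
      f acc * |xc - y| + enterCost f x w xt Wtot i j acc y := by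
  rw [enterCost, enterCost, ← min_add_add_left]
  apply min_le_min <;>
  · rw [← add_assoc, ← mul_add]
    gcongr
    · exact hf0 acc
    · exact abs_sub_le _ _ _

theorem enterCost_eq_add_enterCost {i j : ℕ} {xc y : ℝ} (hi : y ∈ Set.uIcc xc (x i))
    (hj : y ∈ Set.uIcc xc (x j)) (acc : ℝ) :
    enterCost f x w xt Wtot i j acc xc =
      f acc * |xc - y| + enterCost f x w xt Wtot i j acc y := by
  rw [enterCost, enterCost, abs_sub_eq_abs_sub_add_abs_sub hi,
    abs_sub_eq_abs_sub_add_abs_sub hj, mul_add, mul_add, add_assoc, add_assoc,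
    min_add_add_left]

theorem gDP_left_le_enterCost_of_lt (hx : Monotone x) (hw : ∀ ℓ, 0 ≤ w ℓ) (hf : Monotone f)
    {i j k : ℕ} (hik : i < k) (hkj : k ≤ j) (acc : ℝ) :
    gDP f x w xt Wtot i j i acc ≤
      enterCost f x w xt Wtot k j (acc + ∑ ℓ ∈ Ico i k, w ℓ) (x i) := by
  induction k, hik using Nat.le_induction with
  | base => simpa using gDP_left_le_enterCost hkj acc
  | succ k hik ih =>
    set A := acc + ∑ ℓ ∈ Ico i k, w ℓ
    have hA : acc + ∑ ℓ ∈ Ico i (k + 1), w ℓ = A + w k := by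
      rw [sum_Ico_succ_top (by omega), add_assoc]
    have hmid (p : ℕ) (hp : k ≤ p) : x k ∈ Set.uIcc (x i) (x p) :=
      Set.mem_uIcc_of_le (hx (by omega)) (hx hp)
    calc gDP f x w xt Wtot i j i acc
        ≤ enterCost f x w xt Wtot k j A (x i) := ih (by omega)
      _ ≤ f A * |x i - x k| + gDP f x w xt Wtot k j k A := min_le_left _ _
      _ ≤ f (A + w k) * |x i - x k| + enterCost f x w xt Wtot (k + 1) j (A + w k) (x k) := by
        gcongr
        · exact hf (le_add_of_nonneg_right (hw k))
        · exact gDP_left_le_enterCost (by omega) A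
      _ = enterCost f x w xt Wtot (k + 1) j (acc + ∑ ℓ ∈ Ico i (k + 1), w ℓ) (x i) := by
        rw [hA, enterCost_eq_add_enterCost (hmid (k + 1) (by omega)) (hmid j (by omega))]

theorem gDP_right_le_enterCost_of_lt (hx : Monotone x) (hw : ∀ ℓ, 0 ≤ w ℓ) (hf : Monotone f)
    {i j k : ℕ} (hik : i ≤ k) (hkj : k < j) (acc : ℝ) :
    gDP f x w xt Wtot i j j acc ≤
      enterCost f x w xt Wtot i k (acc + ∑ ℓ ∈ Ico (k + 1) (j + 1), w ℓ) (x j) := by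
  induction j, hkj using Nat.le_induction generalizing acc with
  | base => simpa using gDP_right_le_enterCost (show i < k + 1 by omega) acc
  | succ j hkj ih =>
    set A := acc + w (j + 1)
    have hA : acc + ∑ ℓ ∈ Ico (k + 1) (j + 1 + 1), w ℓ =
        A + ∑ ℓ ∈ Ico (k + 1) (j + 1), w ℓ := by
      rw [sum_Ico_succ_top (by omega)]
      ring
    have hmid (p : ℕ) (hp : p ≤ j) : x j ∈ Set.uIcc (x (j + 1)) (x p) :=
      Set.mem_uIcc_of_ge (hx hp) (hx (by omega))
    calc gDP f x w xt Wtot i (j + 1) (j + 1) acc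
        ≤ enterCost f x w xt Wtot i j A (x (j + 1)) := by
          simpa using gDP_right_le_enterCost (show i < j + 1 by omega) acc
      _ ≤ f A * |x (j + 1) - x j| + gDP f x w xt Wtot i j j A := min_le_right _ _
      _ ≤ f (A + ∑ ℓ ∈ Ico (k + 1) (j + 1), w ℓ) * |x (j + 1) - x j| +
          enterCost f x w xt Wtot i k (A + ∑ ℓ ∈ Ico (k + 1) (j + 1), w ℓ) (x j) := by
        gcongr
        · exact hf (le_add_of_nonneg_right (sum_nonneg fun ℓ _ => hw ℓ))
        · exact ih A
      _ = enterCost f x w xt Wtot i k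
            (acc + ∑ ℓ ∈ Ico (k + 1) (j + 1 + 1), w ℓ) (x (j + 1)) := by
        rw [hA, enterCost_eq_add_enterCost (hmid i (by omega)) (hmid k (by omega))]

theorem enterCost_le_add_enterCost_of_subinterval (hx : Monotone x) (hw : ∀ ℓ, 0 ≤ w ℓ)
    (hf : Monotone f) (hf0 : ∀ y, 0 ≤ f y) {i j i' j' q : ℕ} (hii' : i ≤ i')
    (hi'j' : i' ≤ j') (hj'j : j' ≤ j) (hi : q = i ∨ i' = i) (hj : q = j ∨ j' = j)
    (acc xc : ℝ) :
    enterCost f x w xt Wtot i j acc xc ≤ f acc * |xc - x q| +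
      enterCost f x w xt Wtot i' j'
        (acc + (∑ ℓ ∈ Ico i (j + 1), w ℓ - ∑ ℓ ∈ Ico i' (j' + 1), w ℓ)) (x q) := by
  by_cases hsame : i' = i ∧ j' = j
  · obtain ⟨rfl, rfl⟩ := hsame
    rw [sub_self, add_zero]
    exact enterCost_le_add_enterCost hf0 i' j' acc xc (x q)
  rcases eq_or_ne i' i with rfl | hi'
  · obtain rfl : q = j := hj.resolve_right fun h => hsame ⟨rfl, h⟩
    rw [← sum_Ico_consecutive _ (by omega : i' ≤ j' + 1) (by omega : j' + 1 ≤ q + 1),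
      add_sub_cancel_left]
    calc enterCost f x w xt Wtot i' q acc xc
        ≤ f acc * |xc - x q| + gDP f x w xt Wtot i' q q acc := min_le_right _ _
      _ ≤ _ := by
        gcongr
        exact gDP_right_le_enterCost_of_lt hx hw hf hi'j' (by omega) acc
  · obtain rfl : q = i := hi.resolve_right hi'
    obtain rfl : j' = j := hj.resolve_left fun h => hi' (by omega)
    rw [← sum_Ico_consecutive _ (by omega : q ≤ i') (by omega : i' ≤ j' + 1),
      add_sub_cancel_right]
    calc enterCost f x w xt Wtot q j' acc xc
        ≤ f acc * |xc - x q| + gDP f x w xt Wtot q j' q acc := min_le_left _ _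
      _ ≤ _ := by
        gcongr
        exact gDP_left_le_enterCost_of_lt hx hw hf (by omega) hi'j' acc

theorem exists_spans {l : List ℕ} (hl : l ≠ []) : ∃ i j, Spans l i j := by
  have hne : l.toFinset.Nonempty := List.toFinset_nonempty_iff l |>.2 hl
  obtain ⟨i, hi, hmin⟩ := l.toFinset.exists_min_image id hne
  obtain ⟨j, hj, hmax⟩ := l.toFinset.exists_max_image id hne
  simp only [List.mem_toFinset, id] at hi hj hmin hmax
  exact ⟨i, j, hi, hj, fun a ha => ⟨hmin a ha, hmax a ha⟩⟩

theorem Spans.cons_of_spans {q : ℕ} {l : List ℕ} {i j i' j' : ℕ} (h : Spans (q :: l) i j)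
    (h' : Spans l i' j') :
    i ≤ i' ∧ i' ≤ j' ∧ j' ≤ j ∧ (q = i ∨ i' = i) ∧ (q = j ∨ j' = j) := by
  obtain ⟨hi, hj, hb⟩ := h
  obtain ⟨hi', hj', hb'⟩ := h'
  have hi'b := hb i' (List.mem_cons_of_mem q hi')
  have hj'b := hb j' (List.mem_cons_of_mem q hj')
  refine ⟨hi'b.1, (hb' i' hi').2, hj'b.2, ?_, ?_⟩
  · rcases List.mem_cons.1 hi with rfl | hi
    · exact Or.inl rfl
    · exact Or.inr (le_antisymm (hb' i hi).1 hi'b.1)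
  · rcases List.mem_cons.1 hj with rfl | hj
    · exact Or.inl rfl
    · exact Or.inr (le_antisymm hj'b.2 (hb' j hj).2)

/-- The weight added to `acc` is that of the nodes of `[i, j]` outside `l`: the tour has
collected them before. -/
theorem enterCost_le_listCost (hx : Monotone x) (hw : ∀ ℓ, 0 ≤ w ℓ) (hf : Monotone f)
    (hf0 : ∀ y, 0 ≤ f y) {l : List ℕ} (hl : l.Nodup) {i j : ℕ} (hspan : Spans l i j)
    (acc xc : ℝ) :
    enterCost f x w xt Wtot i j acc xc ≤
      listCost f x w xt Wtot (acc + (∑ ℓ ∈ Ico i (j + 1), w ℓ - (l.map w).sum)) xc l := by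
  induction l generalizing i j acc xc with
  | nil => exact absurd hspan.1 List.not_mem_nil
  | cons q rest ih =>
    have hacc : acc ≤ acc + (∑ ℓ ∈ Ico i (j + 1), w ℓ - ((q :: rest).map w).sum) := by
      refine le_add_of_nonneg_right (sub_nonneg.2 (List.sum_map_le_sum_of_subset hw hl ?_))
      intro a ha
      have := hspan.2.2 a ha
      rw [mem_Ico]
      omega
    have hfacc := mul_le_mul_of_nonneg_right (hf hacc) (abs_nonneg (xc - x q))
    rcases eq_or_ne rest [] with rfl | hrest
    · obtain ⟨hi, hj, -⟩ := hspan
      obtain rfl : i = q := List.mem_singleton.1 hi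
      obtain rfl : j = i := List.mem_singleton.1 hj
      rw [enterCost, gDP_self, min_self, listCost, listCost]
      gcongr
    obtain ⟨i', j', hspan'⟩ := exists_spans hrest
    obtain ⟨hii', hi'j', hj'j, hi, hj⟩ := hspan.cons_of_spans hspan'
    calc enterCost f x w xt Wtot i j acc xc
        ≤ f acc * |xc - x q| + enterCost f x w xt Wtot i' j'
            (acc + (∑ ℓ ∈ Ico i (j + 1), w ℓ - ∑ ℓ ∈ Ico i' (j' + 1), w ℓ)) (x q) :=
          enterCost_le_add_enterCost_of_subinterval hx hw hf hf0 hii' hi'j' hj'j hi hj acc xc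
      _ ≤ _ := add_le_add hfacc (ih (List.nodup_cons.1 hl).2 hspan' _ _)
      _ = _ := by
        rw [listCost]
        congr 2
        simp only [List.map_cons, List.sum_cons]
        ring

theorem exists_perm_restrictedCost_eq_listCost :
    ∀ (bs : List Bool) {i j cur : ℕ} (acc : ℝ), i ≤ j → bs.length = j - i →
      (cur = i ∨ cur = j) →
      ∃ L : List ℕ, (cur :: L).Perm (List.range' i (j - i + 1)) ∧
        restrictedCost f x w xt Wtot i j cur acc bs =
          listCost f x w xt Wtot (acc + w cur) (x cur) L
  | [], i, j, cur, acc, hij, hlen, hcur => by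
    obtain rfl : j = i := by simp at hlen; omega
    obtain rfl : cur = j := by tauto
    exact ⟨[], by simp, by rw [restrictedCost, listCost, mul_comm]⟩
  | b :: bs, i, j, cur, acc, hij, hlen, hcur => by
    simp only [List.length_cons] at hlen
    by_cases hi : cur = i
    · subst cur
      obtain ⟨L, hperm, hcost⟩ := exists_perm_restrictedCost_eq_listCost bs (acc + w i)
        (i := i + 1) (j := j) (cur := if b then i + 1 else j) (by omega) (by omega)
        (by cases b <;> simp)
      refine ⟨_ :: L, ?_, by rw [restrictedCost, if_pos rfl, listCost, ← hcost]⟩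
      rw [show j - i + 1 = (j - (i + 1) + 1) + 1 by omega, List.range'_succ]
      exact hperm.cons i
    · obtain rfl : cur = j := hcur.resolve_left hi
      obtain ⟨L, hperm, hcost⟩ := exists_perm_restrictedCost_eq_listCost bs (acc + w cur)
        (i := i) (j := cur - 1) (cur := if b then i else cur - 1) (by omega) (by omega)
        (by cases b <;> simp)
      refine ⟨_ :: L, ?_, by rw [restrictedCost, if_neg hi, listCost, ← hcost]⟩
      rw [show cur - i + 1 = (cur - 1 - i + 1) + 1 by omega, List.range'_concat,
        show i + 1 * (cur - 1 - i + 1) = cur by omega]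
      exact (hperm.cons cur).trans (List.perm_append_singleton _ _).symm

theorem exists_fullTourCost_eq {m : ℕ} (hWtot : Wtot = ∑ ℓ ∈ range (m + 1), w ℓ) {s : ℕ}
    (hs : s = 0 ∨ s = m) :
    ∃ σ, fullTourCost m x w xt f σ = f 0 * |xt - x s| + gDP f x w xt Wtot 0 m s 0 := by
  obtain ⟨bs, hlen, hbs⟩ := exists_restrictedCost_eq_gDP f x w xt Wtot 0 m s 0
  obtain ⟨L, hperm, hcost⟩ :=
    exists_perm_restrictedCost_eq_listCost bs 0 (Nat.zero_le m) hlen hs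
  obtain ⟨σ, hσ⟩ := List.exists_ofFn_perm_eq (n := m + 1)
    (hperm.trans (by rw [List.range_eq_range', Nat.sub_zero]))
  exact ⟨σ, by rw [fullTourCost_eq_listCost hWtot, hσ, ← hbs, hcost, listCost]⟩

theorem enterCost_le_fullTourCost (hx : Monotone x) (hw : ∀ ℓ, 0 ≤ w ℓ) (hf : Monotone f)
    (hf0 : ∀ y, 0 ≤ f y) {m : ℕ} (hWtot : Wtot = ∑ ℓ ∈ range (m + 1), w ℓ)
    (σ : Equiv.Perm (Fin (m + 1))) :
    enterCost f x w xt Wtot 0 m 0 xt ≤ fullTourCost m x w xt f σ := by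
  set L := List.ofFn fun k => (σ k : ℕ)
  have hnd : L.Nodup := List.nodup_ofFn.2 (Fin.val_injective.comp σ.injective)
  have hmem (a : ℕ) : a ∈ L ↔ a < m + 1 := by
    simp only [L, List.mem_ofFn]
    exact ⟨fun ⟨k, hk⟩ => hk ▸ (σ k).isLt, fun ha => ⟨σ.symm ⟨a, ha⟩, by simp⟩⟩
  have hspan : Spans L 0 m :=
    ⟨(hmem 0).2 m.succ_pos, (hmem m).2 m.lt_succ_self,
      fun a ha => ⟨a.zero_le, Nat.lt_succ_iff.1 ((hmem a).1 ha)⟩⟩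
  have hsum : (L.map w).sum = ∑ ℓ ∈ Ico 0 (m + 1), w ℓ := by
    rw [List.map_ofFn, List.sum_ofFn, ← range_eq_Ico, ← Fin.sum_univ_eq_sum_range]
    exact Equiv.sum_comp σ (fun k => w k)
  refine (enterCost_le_listCost hx hw hf hf0 hnd hspan 0 xt).trans_eq ?_
  rw [hsum, sub_self, add_zero, fullTourCost_eq_listCost hWtot]

end TourCost

/-- Correctness of the path-metric DP: the minimum tour cost over all tours with fixed
start `t` equals `min(g(v_1,v_n,v_1,t) + f(0)·d(t,v_1), g(v_1,v_n,v_n,t) + f(0)·d(t,v_n))`. -/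
theorem stmt_10 (m : ℕ) (x w : ℕ → ℝ) (hx : Monotone x) (hw : ∀ ℓ, 0 ≤ w ℓ)
    (f : ℝ → ℝ) (hf : Monotone f) (hf0 : ∀ y, 0 ≤ f y) (xt : ℝ)
    (Wtot : ℝ) (hWtot : Wtot = ∑ ℓ ∈ Finset.range (m + 1), w ℓ) :
    IsLeast (Set.range (fullTourCost m x w xt f))
      (min (f 0 * |xt - x 0| + gDP f x w xt Wtot 0 m 0 0)
           (f 0 * |xt - x m| + gDP f x w xt Wtot 0 m m 0)) := by
  constructor
  · rcases min_choice (f 0 * |xt - x 0| + gDP f x w xt Wtot 0 m 0 0)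
      (f 0 * |xt - x m| + gDP f x w xt Wtot 0 m m 0) with h | h <;> rw [h]
    · exact exists_fullTourCost_eq hWtot (Or.inl rfl)
    · exact exists_fullTourCost_eq hWtot (Or.inr rfl)
  · rintro _ ⟨σ, rfl⟩
    exact enterCost_le_fullTourCost hx hw hf hf0 hWtot σ
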